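/- If m = 3 and q = (α, β, γ) ∈ [1,2]³ with 1/α + 1/β + 1/γ = 2, then any constant C satisfying the mixed-norm trilinear inequality with exponents (α, β, γ) for all real trilinear forms satisfies C ≥ 2^{(2αγ + αβ + βγ - 2αβγ)/(αβγ)}. -/

import Mathlib

/-- The canonical basis vectors of `ℝⁿ`. -/
def e (n : ℕ) (j : Fin n) : Fin n → ℝ := fun i => if i = j then 1 else 0

/-- The supremum norm of an `m`-linear form on `(ℓ∞ⁿ)^m`. -/
noncomputable def supNorm (m n : ℕ)
    (T : MultilinearMap ℝ (fun _ : Fin m => (Fin n → ℝ)) ℝ) : ℝ :=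
  sSup {v : ℝ | ∃ x : Fin m → Fin n → ℝ, (∀ i, ‖x i‖ ≤ 1) ∧ v = |T x|}

/-!
The form `L₂(a, b; c, d) = ac + ad + bc - bd` has norm 2 on `ℓ∞²` because
`|c + d| + |c - d| ≤ 2`. Gluing two copies of it along `x₀ + x₁` and `x₀ - x₁` gives a
trilinear form `L₃` on `ℓ∞⁴` whose norm is still at most `4`, while its coefficients are `±1` on
the triples `(j₁, j₂, j₃)` with `j₁ ∈ {0, 1}` and `j₂, j₃` in the same half of `{0, 1, 2, 3}`.
Its mixed norm is therefore `2^(1/α) · 4^(1/β) · 2^(1/γ)`, so `C ≥ 2^(1/α + 2/β + 1/γ - 2)`,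
which is the claimed exponent.
-/

noncomputable def mixedNorm (α β γ : ℝ) {n : ℕ}
    (T : MultilinearMap ℝ (fun _ : Fin 3 => Fin n → ℝ) ℝ) : ℝ :=
  (∑ j₁ : Fin n, (∑ j₂ : Fin n, (∑ j₃ : Fin n,
    |T ![e n j₁, e n j₂, e n j₃]| ^ γ) ^ (β / γ)) ^ (α / β)) ^ (1 / α)

lemma supNorm_nonneg (m n : ℕ) (T : MultilinearMap ℝ (fun _ : Fin m => Fin n → ℝ) ℝ) :
    0 ≤ supNorm m n T :=
  Real.sSup_nonneg <| by rintro _ ⟨x, -, rfl⟩; exact abs_nonneg _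

lemma supNorm_le {m n : ℕ} {T : MultilinearMap ℝ (fun _ : Fin m => Fin n → ℝ) ℝ} {M : ℝ}
    (hM : 0 ≤ M) (hT : ∀ x : Fin m → Fin n → ℝ, (∀ i, ‖x i‖ ≤ 1) → |T x| ≤ M) :
    supNorm m n T ≤ M :=
  Real.sSup_le (by rintro _ ⟨x, hx, rfl⟩; exact hT x hx) hM

lemma abs_add_add_abs_sub_le_two {c d : ℝ} (hc : |c| ≤ 1) (hd : |d| ≤ 1) :
    |c + d| + |c - d| ≤ 2 := by
  rw [abs_le] at hc hd
  rcases abs_cases (c + d) with ⟨h, -⟩ | ⟨h, -⟩ <;>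
    rcases abs_cases (c - d) with ⟨h', -⟩ | ⟨h', -⟩ <;> linarith

def L₂ (a b c d : ℝ) : ℝ := a * c + a * d + b * c - b * d

lemma abs_L₂_le {a b c d : ℝ} (ha : |a| ≤ 1) (hb : |b| ≤ 1) (hc : |c| ≤ 1) (hd : |d| ≤ 1) :
    |L₂ a b c d| ≤ 2 :=
  calc |L₂ a b c d| = |a * (c + d) + b * (c - d)| := by rw [L₂]; ring_nf
    _ ≤ |a| * |c + d| + |b| * |c - d| := by rw [← abs_mul, ← abs_mul]; exact abs_add_le _ _
    _ ≤ 1 * |c + d| + 1 * |c - d| := by gcongr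
    _ ≤ 2 := by simpa using abs_add_add_abs_sub_le_two hc hd

def L₃ : MultilinearMap ℝ (fun _ : Fin 3 => Fin 4 → ℝ) ℝ where
  toFun x := (x 0 0 + x 0 1) * L₂ (x 1 0) (x 1 1) (x 2 0) (x 2 1)
    + (x 0 0 - x 0 1) * L₂ (x 1 2) (x 1 3) (x 2 2) (x 2 3)
  map_update_add' x i a b := by
    fin_cases i <;> simp [L₂, Fin.ext_iff] <;> ring
  map_update_smul' x i c a := by
    fin_cases i <;> simp [L₂, Fin.ext_iff] <;> ring

lemma abs_L₃_le {x : Fin 3 → Fin 4 → ℝ} (hx : ∀ i, ‖x i‖ ≤ 1) : |L₃ x| ≤ 4 := by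
  have h : ∀ i j, |x i j| ≤ 1 := fun i j => (norm_le_pi_norm (x i) j).trans (hx i)
  calc |L₃ x| ≤ |x 0 0 + x 0 1| * 2 + |x 0 0 - x 0 1| * 2 := by
        refine (abs_add_le _ _).trans ?_
        rw [abs_mul, abs_mul]
        gcongr <;> exact abs_L₂_le (h _ _) (h _ _) (h _ _) (h _ _)
    _ ≤ 4 := by linarith [abs_add_add_abs_sub_le_two (h 0 0) (h 0 1)]

lemma sum_abs_L₃_basis_rpow {γ : ℝ} (hγ : γ ≠ 0) (j₁ j₂ : Fin 4) :
    ∑ j₃ : Fin 4, |L₃ ![e 4 j₁, e 4 j₂, e 4 j₃]| ^ γ = if (j₁ : ℕ) < 2 then 2 else 0 := by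
  fin_cases j₁ <;> fin_cases j₂ <;>
    simp [Fin.sum_univ_four, L₃, L₂, e, Real.zero_rpow hγ] <;> norm_num

lemma mixedNorm_L₃ {α β γ : ℝ} (hα : α ≠ 0) (hβ : β ≠ 0) (hγ : γ ≠ 0) :
    mixedNorm α β γ L₃ = 2 ^ (1 / α + 2 / β + 1 / γ) := by
  have h₂ : ∀ j₁ : Fin 4, (∑ j₂ : Fin 4, (∑ j₃ : Fin 4,
      |L₃ ![e 4 j₁, e 4 j₂, e 4 j₃]| ^ γ) ^ (β / γ)) ^ (α / β)
      = if (j₁ : ℕ) < 2 then (2 : ℝ) ^ ((2 + β / γ) * (α / β)) else 0 := by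
    intro j₁
    simp only [sum_abs_L₃_basis_rpow hγ, Finset.sum_const, Finset.card_univ, Fintype.card_fin]
    split_ifs
    · rw [Real.rpow_mul zero_le_two, Real.rpow_add two_pos, nsmul_eq_mul]
      norm_num
    · simp [Real.zero_rpow (div_ne_zero hβ hγ), Real.zero_rpow (div_ne_zero hα hβ)]
  rw [mixedNorm, Finset.sum_congr rfl fun j₁ _ => h₂ j₁, Fin.sum_univ_four]
  norm_num
  rw [← two_mul, mul_comm, ← Real.rpow_add_one two_ne_zero, ← Real.rpow_mul zero_le_two]
  congr 1
  field_simp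
  ring

lemma supNorm_L₃_le : supNorm 3 4 L₃ ≤ 4 :=
  supNorm_le (by norm_num) fun _ hx => abs_L₃_le hx

theorem stmt_15_general (α β γ : ℝ) (hα : α ∈ Set.Icc (1:ℝ) 2) (hβ : β ∈ Set.Icc (1:ℝ) 2)
    (hγ : γ ∈ Set.Icc (1:ℝ) 2) (C : ℝ)
    (hC : ∀ n : ℕ, ∀ T : MultilinearMap ℝ (fun _ : Fin 3 => (Fin n → ℝ)) ℝ,
      (∑ j₁ : Fin n, (∑ j₂ : Fin n, (∑ j₃ : Fin n,
          |T ![e n j₁, e n j₂, e n j₃]| ^ γ) ^ (β / γ)) ^ (α / β)) ^ (1 / α)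
        ≤ C * supNorm 3 n T) :
    (2:ℝ) ^ ((2*α*γ + α*β + β*γ - 2*α*β*γ) / (α*β*γ)) ≤ C := by
  have hα₀ : α ≠ 0 := (zero_lt_one.trans_le hα.1).ne'
  have hβ₀ : β ≠ 0 := (zero_lt_one.trans_le hβ.1).ne'
  have hγ₀ : γ ≠ 0 := (zero_lt_one.trans_le hγ.1).ne'
  have hL₃ : (2:ℝ) ^ (1 / α + 2 / β + 1 / γ) ≤ C * supNorm 3 4 L₃ :=
    mixedNorm_L₃ hα₀ hβ₀ hγ₀ ▸ hC 4 L₃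
  have hC₀ : 0 < C :=
    pos_of_mul_pos_left ((Real.rpow_pos_of_pos two_pos _).trans_le hL₃) (supNorm_nonneg 3 4 L₃)
  have hexp : (2*α*γ + α*β + β*γ - 2*α*β*γ) / (α*β*γ) = 1 / α + 2 / β + 1 / γ - 2 := by
    field_simp
    ring
  rw [hexp, Real.rpow_sub two_pos, Real.rpow_two, div_le_iff₀ (by norm_num)]
  calc (2:ℝ) ^ (1 / α + 2 / β + 1 / γ) ≤ C * supNorm 3 4 L₃ := hL₃
    _ ≤ C * 2 ^ 2 := by gcongr; exact supNorm_L₃_le.trans_eq (by norm_num)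

/-- Trilinear lower bound: for `(α,β,γ) ∈ [1,2]³` with `1/α+1/β+1/γ = 2`, any
constant `C` in the mixed-norm trilinear inequality with exponents `(α,β,γ)`
satisfies `C ≥ 2^{(2αγ + αβ + βγ - 2αβγ)/(αβγ)}`. -/
theorem stmt_15 (α β γ : ℝ) (hα : α ∈ Set.Icc (1:ℝ) 2) (hβ : β ∈ Set.Icc (1:ℝ) 2)
    (hγ : γ ∈ Set.Icc (1:ℝ) 2) (hsum : 1/α + 1/β + 1/γ = 2) (C : ℝ)
    (hC : ∀ n : ℕ, ∀ T : MultilinearMap ℝ (fun _ : Fin 3 => (Fin n → ℝ)) ℝ,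
      (∑ j₁ : Fin n, (∑ j₂ : Fin n, (∑ j₃ : Fin n,
          |T ![e n j₁, e n j₂, e n j₃]| ^ γ) ^ (β / γ)) ^ (α / β)) ^ (1 / α)
        ≤ C * supNorm 3 n T) :
    (2:ℝ) ^ ((2*α*γ + α*β + β*γ - 2*α*β*γ) / (α*β*γ)) ≤ C :=
  stmt_15_general α β γ hα hβ hγ C hC
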